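/- Let L ≥ 2, k = (k_1,…,k_L) with all k_ℓ ≥ 1, s = (s_1,…,s_L) with all s_ℓ ≥ 1, and k := k_1 + Σ_{ℓ=2}^L (k_ℓ−1)S_ℓ where S_ℓ := s_1⋯s_{ℓ−1}. Set k′ := (k_1 + s_1(k_2−1), k_3, …, k_L), s′ := (s_1·s_2, s_3, …, s_L), and k̂_2 := (k − k_1)/s_1 + 1. Then F(k,s) = F(k′,s′) ∩ F((k_1, k̂_2), (s_1, 1)). -/

import Mathlib

/-- All monomials of `P` involve only `x^s` and `y^s`. -/
def MonoS (s : ℕ) (P : MvPolynomial (Fin 2) ℂ) : Prop :=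
  ∀ m ∈ P.support, s ∣ m 0 ∧ s ∣ m 1

/-- `S ℓ = s_1 ⋯ s_{ℓ-1}` (0-indexed: `Sp s i = ∏_{j<i} s j`, so `Sp s 0 = 1`). -/
def Sp (s : ℕ → ℕ) (i : ℕ) : ℕ := ∏ j ∈ Finset.range i, s j

/-- `F(k,s)`: homogeneous polynomials of degree `k-1` admitting a factorization
`P = P_L ⋯ P_1`, where `P_ℓ` is homogeneous of degree `S_ℓ(k_ℓ-1)` with all monomials
in `x^{S_ℓ}, y^{S_ℓ}` (layers are 0-indexed here). -/
def Fset (L : ℕ) (k s : ℕ → ℕ) : Set (MvPolynomial (Fin 2) ℂ) :=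
  { P | ∃ Q : ℕ → MvPolynomial (Fin 2) ℂ, P = ∏ i ∈ Finset.range L, Q i ∧
      ∀ i < L, (Q i).IsHomogeneous (Sp s i * (k i - 1)) ∧ MonoS (Sp s i) (Q i) }

/-!
Merging the first two layers of a factorization in `F(k, s)` gives one in `F(k', s')`, and
grouping all layers after the first gives one in `F((k₁, k̂₂), (s₁, 1))`.

Conversely, write `P = C * T = R₀ * R₁`, with `C` the merged first layer, `T` the product of the
remaining layers, `deg R₀ = k₁ - 1`, and `T`, `R₁` forms in `x^s₁, y^s₁`. Dehomogenizing at
`y = 1` gives `u * t(X^s₁) = r * h(X^s₁)`. After cancelling `gcd t h` the expanded cofactors stay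
coprime, so `u = ρ * b(X^s₁)` with `ρ ∣ r`, hence `deg ρ ≤ k₁ - 1`. Since every polynomial over
`ℂ` splits, moving a suitable factor of `b` into `ρ` splits `C` into a form of degree `k₁ - 1`
times a form of degree `s₁ (k₂ - 1)` in `x^s₁, y^s₁`, which is a factorization in `F(k, s)`.
-/

open Polynomial Finset

namespace Polynomial

section Field

variable {K : Type*} [Field K]

theorem exists_dvd_natDegree_eq [IsAlgClosed K] {p : K[X]} (hp : p ≠ 0) {n : ℕ}
    (hn : n ≤ p.natDegree) : ∃ q, q ∣ p ∧ q.natDegree = n := by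
  obtain ⟨t, ht⟩ := Multiset.exists_mem_of_ne_zero (s := p.roots.powersetCard n) <| by
    rw [← Multiset.card_pos, Multiset.card_powersetCard, IsAlgClosed.card_roots_eq_natDegree]
    exact Nat.choose_pos hn
  rw [Multiset.mem_powersetCard] at ht
  exact ⟨(t.map (X - C ·)).prod, (Multiset.prod_X_sub_C_dvd_iff_le_roots hp t).2 ht.1,
    (natDegree_multiset_prod_X_sub_C_eq_card t).trans ht.2⟩

theorem exists_eq_mul_expand_of_mul_expand_eq {s : ℕ} (hs : 0 < s) {u t r h : K[X]}
    (hh : h ≠ 0) (heq : u * expand K s t = r * expand K s h) :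
    ∃ ρ b, u = ρ * expand K s b ∧ ρ ∣ r := by
  classical
  obtain ⟨t', h', ht, hh', hunit⟩ := _root_.extract_gcd t h
  generalize gcd t h = g at ht hh'
  subst ht hh'
  have hcop : IsCoprime (expand K s h') (expand K s t') := by
    rw [isCoprime_expand hs.ne', ← isRelPrime_iff_isCoprime, ← gcd_isUnit_iff_isRelPrime,
      gcd_comm]
    exact hunit
  have heq' : u * expand K s t' = r * expand K s h' := by
    refine mul_left_cancel₀ ((expand_ne_zero hs).2 (left_ne_zero_of_mul hh)) ?_
    rw [map_mul, map_mul] at heq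
    linear_combination heq
  obtain ⟨ρ, hρ⟩ := hcop.dvd_of_dvd_mul_right (Dvd.intro_left r heq'.symm)
  refine ⟨ρ, h', by rw [hρ, mul_comm], expand K s t', ?_⟩
  refine mul_left_cancel₀ ((expand_ne_zero hs).2 (right_ne_zero_of_mul hh)) ?_
  linear_combination heq'.symm + expand K s t' * hρ

theorem exists_eq_mul_expand_natDegree_le [IsAlgClosed K] {s a c : ℕ} (hs : 0 < s)
    {u ρ b : K[X]} (hu : u = ρ * expand K s b) (hρ : ρ.natDegree ≤ a)
    (hdeg : u.natDegree ≤ a + s * c) :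
    ∃ q w, u = q * expand K s w ∧ q.natDegree ≤ a ∧ w.natDegree ≤ c := by
  by_cases hb : b.natDegree ≤ c
  · exact ⟨ρ, b, hu, hρ, hb⟩
  obtain ⟨w, ⟨b', rfl⟩, hw⟩ :=
    exists_dvd_natDegree_eq (ne_zero_of_natDegree_gt (not_le.1 hb)) (not_le.1 hb).le
  refine ⟨ρ * expand K s b', w, by rw [hu, map_mul]; ring, ?_, hw.le⟩
  rcases eq_or_ne ρ 0 with rfl | hρ0
  · simp
  have hw0 : w ≠ 0 := by rintro rfl; simp at hb
  have hb' : b' ≠ 0 := by rintro rfl; simp at hb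
  have hE : ∀ {f : K[X]}, f ≠ 0 → expand K s f ≠ 0 := (expand_ne_zero hs).2
  have hq : (ρ * expand K s b').natDegree = ρ.natDegree + s * b'.natDegree := by
    rw [natDegree_mul hρ0 (hE hb'), natDegree_expand, mul_comm]
  have hu' : u.natDegree = ρ.natDegree + s * b'.natDegree + s * c := by
    rw [hu, map_mul, natDegree_mul hρ0 (mul_ne_zero (hE hw0) (hE hb')),
      natDegree_mul (hE hw0) (hE hb'), natDegree_expand, natDegree_expand, hw]
    ring
  omega

end Field

section Dehomogenize

variable {R : Type*} [CommRing R] {q : MvPolynomial (Fin 2) R} {n : ℕ}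

theorem homogenize_aeval_X_one_of_isHomogeneous (hq : q.IsHomogeneous n) :
    (MvPolynomial.aeval ![(X : R[X]), 1] q).homogenize n = q :=
  homogenize_eq_of_isHomogeneous hq rfl

theorem natDegree_aeval_X_one_le_of_isHomogeneous (hq : q.IsHomogeneous n) :
    (MvPolynomial.aeval ![(X : R[X]), 1] q).natDegree ≤ n := by
  rw [q.as_sum, map_sum]
  refine natDegree_sum_le_of_forall_le _ _ fun m hm => ?_
  have hm0 : m 0 ≤ n := by
    rw [← hq (MvPolynomial.mem_support_iff.1 hm), Finsupp.weight_apply,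
      Finsupp.sum_fintype _ _ (by simp)]
    simp [Fin.sum_univ_two]
  rw [MvPolynomial.aeval_monomial, Finsupp.prod_fintype _ _ (by simp), Fin.prod_univ_two]
  simpa [← C_eq_algebraMap] using (natDegree_C_mul_X_pow_le (q.coeff m) (m 0)).trans hm0

theorem aeval_X_one_ne_zero_of_isHomogeneous (hq : q.IsHomogeneous n) (h : q ≠ 0) :
    MvPolynomial.aeval ![(X : R[X]), 1] q ≠ 0 := fun h0 =>
  h (by rw [← homogenize_aeval_X_one_of_isHomogeneous hq, h0, homogenize_zero])

theorem coeff_aeval_X_one_of_isHomogeneous (hq : q.IsHomogeneous n) {i : ℕ} (hi : i ≤ n) :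
    (MvPolynomial.aeval ![(X : R[X]), 1] q).coeff i = q.coeff (fun₀ | 0 => i | 1 => n - i) := by
  conv_rhs => rw [← homogenize_aeval_X_one_of_isHomogeneous hq]
  simp [coeff_homogenize, hi]

end Dehomogenize

end Polynomial

theorem monoS_one (P : MvPolynomial (Fin 2) ℂ) : MonoS 1 P :=
  fun _ _ => ⟨one_dvd _, one_dvd _⟩

theorem monoS_zero (s : ℕ) : MonoS s 0 := by
  simp [MonoS]

theorem MonoS.of_dvd {s t : ℕ} {P : MvPolynomial (Fin 2) ℂ} (hP : MonoS t P) (h : s ∣ t) :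
    MonoS s P :=
  fun m hm => ⟨h.trans (hP m hm).1, h.trans (hP m hm).2⟩

theorem MonoS.mul {s : ℕ} {P Q : MvPolynomial (Fin 2) ℂ} (hP : MonoS s P) (hQ : MonoS s Q) :
    MonoS s (P * Q) := by
  classical
  intro m hm
  obtain ⟨a, ha, b, hb, rfl⟩ := Finset.mem_add.1 (MvPolynomial.support_mul P Q hm)
  exact ⟨by simpa using dvd_add (hP a ha).1 (hQ b hb).1,
    by simpa using dvd_add (hP a ha).2 (hQ b hb).2⟩

theorem monoS_prod {ι : Type*} {s : ℕ} (I : Finset ι) {Q : ι → MvPolynomial (Fin 2) ℂ}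
    (h : ∀ i ∈ I, MonoS s (Q i)) : MonoS s (∏ i ∈ I, Q i) :=
  Finset.prod_induction _ _ (fun _ _ => MonoS.mul) (fun m hm => by
    rw [MvPolynomial.support_one] at hm
    simp_all) h

theorem MonoS.exists_aeval_X_one_eq_expand {s n : ℕ} (hs : s ≠ 0) {q : MvPolynomial (Fin 2) ℂ}
    (hq : q.IsHomogeneous n) (hqs : MonoS s q) :
    ∃ g, MvPolynomial.aeval ![X, 1] q = expand ℂ s g := by
  refine ⟨contract s (MvPolynomial.aeval ![X, 1] q), Polynomial.ext fun i => ?_⟩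
  rw [coeff_expand (Nat.pos_of_ne_zero hs)]
  split_ifs with hsi
  · rw [coeff_contract hs, Nat.div_mul_cancel hsi]
  by_contra hne
  have hi := le_natDegree_of_ne_zero hne
  rw [coeff_aeval_X_one_of_isHomogeneous hq
    (hi.trans (natDegree_aeval_X_one_le_of_isHomogeneous hq))] at hne
  exact hsi (by simpa using (hqs _ (MvPolynomial.mem_support_iff.2 hne)).1)

theorem monoS_homogenize_expand {s : ℕ} (hs : 0 < s) (w : ℂ[X]) (c : ℕ) :
    MonoS s ((expand ℂ s w).homogenize (s * c)) := by
  intro m hm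
  rw [MvPolynomial.mem_support_iff, coeff_homogenize] at hm
  split_ifs at hm with hdeg
  · rw [coeff_expand hs] at hm
    split_ifs at hm with hsm
    · refine ⟨hsm, ?_⟩
      rw [show m 1 = s * c - m 0 by omega]
      exact Nat.dvd_sub (dvd_mul_right s c) hsm
    · exact absurd rfl hm
  · exact absurd rfl hm

theorem exists_eq_mul_monoS_of_mul_eq {s a c d e : ℕ} (hs : 0 < s)
    {C T R₀ R₁ : MvPolynomial (Fin 2) ℂ} (hC : C.IsHomogeneous (a + s * c))
    (hT : T.IsHomogeneous d) (hTs : MonoS s T) (hR₀ : R₀.IsHomogeneous a)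
    (hR₁ : R₁.IsHomogeneous e) (hR₁s : MonoS s R₁) (heq : C * T = R₀ * R₁)
    (hne : C * T ≠ 0) :
    ∃ A B, C = A * B ∧ A.IsHomogeneous a ∧ B.IsHomogeneous (s * c) ∧ MonoS s B := by
  obtain ⟨t, ht⟩ := hTs.exists_aeval_X_one_eq_expand hs.ne' hT
  obtain ⟨h, hh⟩ := hR₁s.exists_aeval_X_one_eq_expand hs.ne' hR₁
  rw [heq] at hne
  have hr : MvPolynomial.aeval ![X, 1] R₀ ≠ 0 :=
    aeval_X_one_ne_zero_of_isHomogeneous hR₀ (left_ne_zero_of_mul hne)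
  have hh0 : h ≠ 0 := by
    rintro rfl
    exact aeval_X_one_ne_zero_of_isHomogeneous hR₁ (right_ne_zero_of_mul hne) (by simpa using hh)
  obtain ⟨ρ, b, hu, hρ⟩ := exists_eq_mul_expand_of_mul_expand_eq hs hh0
    (by rw [← ht, ← hh, ← map_mul, ← map_mul, heq])
  obtain ⟨q, w, hqw, hq, hw⟩ := exists_eq_mul_expand_natDegree_le hs hu
    ((natDegree_le_of_dvd hρ hr).trans (natDegree_aeval_X_one_le_of_isHomogeneous hR₀))
    (natDegree_aeval_X_one_le_of_isHomogeneous hC)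
  have hw' : (expand ℂ s w).natDegree ≤ s * c := by
    rw [natDegree_expand, mul_comm]
    exact Nat.mul_le_mul_left s hw
  refine ⟨q.homogenize a, (expand ℂ s w).homogenize (s * c), ?_, isHomogeneous_homogenize _,
    isHomogeneous_homogenize _, monoS_homogenize_expand hs w c⟩
  rw [← homogenize_mul _ _ hq hw', ← hqw, homogenize_aeval_X_one_of_isHomogeneous hC]

def IsLayered {ι : Type*} (I : Finset ι) (d S : ι → ℕ) (P : MvPolynomial (Fin 2) ℂ) :
    Prop :=
  ∃ Q : ι → MvPolynomial (Fin 2) ℂ,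
    P = ∏ i ∈ I, Q i ∧ ∀ i ∈ I, (Q i).IsHomogeneous (d i) ∧ MonoS (S i) (Q i)

section IsLayered

variable {ι : Type*} {I : Finset ι} {d S : ι → ℕ} {P : MvPolynomial (Fin 2) ℂ}

theorem isLayered_singleton {i : ι} :
    IsLayered {i} d S P ↔ P.IsHomogeneous (d i) ∧ MonoS (S i) P := by
  refine ⟨?_, fun h => ⟨fun _ => P, by simp, by simpa using h⟩⟩
  rintro ⟨Q, rfl, hQ⟩
  simpa using hQ i (mem_singleton_self i)

theorem isLayered_insert [DecidableEq ι] {i : ι} (hi : i ∉ I) :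
    IsLayered (insert i I) d S P ↔ ∃ A B, P = A * B ∧
      (A.IsHomogeneous (d i) ∧ MonoS (S i) A) ∧ IsLayered I d S B := by
  constructor
  · rintro ⟨Q, rfl, hQ⟩
    exact ⟨Q i, ∏ j ∈ I, Q j, prod_insert hi, hQ i (mem_insert_self i I),
      Q, rfl, fun j hj => hQ j (mem_insert_of_mem hj)⟩
  · rintro ⟨A, B, rfl, hA, Q, rfl, hQ⟩
    have hupd : ∀ j ∈ I, Function.update Q i A j = Q j := fun j hj =>
      Function.update_of_ne (ne_of_mem_of_not_mem hj hi) A Q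
    refine ⟨Function.update Q i A, ?_, ?_⟩
    · rw [prod_insert hi, Function.update_self, prod_congr rfl hupd]
    · rw [forall_mem_insert, Function.update_self]
      exact ⟨hA, fun j hj => hupd j hj ▸ hQ j hj⟩

theorem isLayered_map {κ : Type*} {I : Finset κ} (e : κ ↪ ι) :
    IsLayered (I.map e) d S P ↔ IsLayered I (d ∘ e) (S ∘ e) P := by
  classical
  constructor
  · rintro ⟨Q, rfl, hQ⟩
    exact ⟨Q ∘ e, prod_map I e Q, fun j hj => hQ (e j) (mem_map_of_mem e hj)⟩
  · rintro ⟨Q, rfl, hQ⟩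
    have hext : ∀ j, Function.extend e Q 1 (e j) = Q j := e.injective.extend_apply Q 1
    refine ⟨Function.extend e Q 1, by simp [prod_map, hext], ?_⟩
    simpa [hext] using hQ

theorem isLayered_congr {d' S' : ι → ℕ} (hd : ∀ i ∈ I, d i = d' i)
    (hS : ∀ i ∈ I, S i = S' i) :
    IsLayered I d S P ↔ IsLayered I d' S' P := by
  refine exists_congr fun Q => and_congr_right fun _ => forall₂_congr fun i hi => ?_
  rw [hd i hi, hS i hi]

theorem IsLayered.isHomogeneous (h : IsLayered I d S P) : P.IsHomogeneous (∑ i ∈ I, d i) := by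
  obtain ⟨Q, rfl, hQ⟩ := h
  exact MvPolynomial.IsHomogeneous.prod I Q d fun i hi => (hQ i hi).1

theorem IsLayered.monoS {n : ℕ} (h : IsLayered I d S P) (hn : ∀ i ∈ I, n ∣ S i) :
    MonoS n P := by
  obtain ⟨Q, rfl, hQ⟩ := h
  exact monoS_prod I fun i hi => (hQ i hi).2.of_dvd (hn i hi)

end IsLayered

theorem Sp_zero (s : ℕ → ℕ) : Sp s 0 = 1 := prod_range_zero s

theorem Sp_one (s : ℕ → ℕ) : Sp s 1 = s 0 := prod_range_one s

theorem dvd_Sp {s : ℕ → ℕ} {i j : ℕ} (h : j < i) : s j ∣ Sp s i :=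
  dvd_prod_of_mem s (mem_range.2 h)

theorem Sp_eq_of_merge {s s' : ℕ → ℕ} (hs'0 : s' 0 = s 0 * s 1)
    (hs' : ∀ i, 1 ≤ i → s' i = s (i + 1)) {i : ℕ} (hi : 1 ≤ i) :
    Sp s' i = Sp s (i + 1) := by
  induction i, hi using Nat.le_induction with
  | base => simp [Sp, prod_range_succ, hs'0]
  | succ i hi ih =>
    rw [Sp, prod_range_succ, ← Sp, ih, hs' i hi, Sp, Sp, prod_range_succ _ (i + 1)]

def layerDeg (k s : ℕ → ℕ) (i : ℕ) : ℕ := Sp s i * (k i - 1)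

theorem mem_Fset_iff {L : ℕ} {k s : ℕ → ℕ} {P : MvPolynomial (Fin 2) ℂ} :
    P ∈ Fset L k s ↔ IsLayered (range L) (layerDeg k s) (Sp s) P := by
  simp [Fset, IsLayered, layerDeg]

theorem zero_mem_Fset {L : ℕ} (hL : 0 < L) (k s : ℕ → ℕ) :
    (0 : MvPolynomial (Fin 2) ℂ) ∈ Fset L k s :=
  ⟨fun _ => 0, (prod_eq_zero (mem_range.2 hL) rfl).symm,
    fun _ _ => ⟨MvPolynomial.isHomogeneous_zero _ _ _, monoS_zero _⟩⟩

theorem mem_Fset_iff_exists_mul {L : ℕ} (hL : 0 < L) {k s : ℕ → ℕ}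
    {P : MvPolynomial (Fin 2) ℂ} :
    P ∈ Fset L k s ↔ ∃ A T, P = A * T ∧ A.IsHomogeneous (k 0 - 1) ∧
      IsLayered (Ico 1 L) (layerDeg k s) (Sp s) T := by
  rw [mem_Fset_iff, range_eq_Ico, ← insert_Ico_add_one_left_eq_Ico hL, isLayered_insert (by simp)]
  simp [layerDeg, Sp_zero, monoS_one]

theorem isLayered_Ico_one_iff {L : ℕ} (hL : 1 < L) {k s : ℕ → ℕ}
    {T : MvPolynomial (Fin 2) ℂ} :
    IsLayered (Ico 1 L) (layerDeg k s) (Sp s) T ↔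
      ∃ B T', T = B * T' ∧ (B.IsHomogeneous (s 0 * (k 1 - 1)) ∧ MonoS (s 0) B) ∧
        IsLayered (Ico 2 L) (layerDeg k s) (Sp s) T' := by
  rw [← insert_Ico_add_one_left_eq_Ico hL, isLayered_insert (by simp), layerDeg, Sp_one]
  rfl

theorem mem_Fset_two_iff {k s : ℕ → ℕ} {P : MvPolynomial (Fin 2) ℂ} :
    P ∈ Fset 2 k s ↔ ∃ A B, P = A * B ∧ A.IsHomogeneous (k 0 - 1) ∧
      B.IsHomogeneous (s 0 * (k 1 - 1)) ∧ MonoS (s 0) B := by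
  rw [mem_Fset_iff_exists_mul two_pos, show Ico 1 2 = {1} from rfl]
  simp only [isLayered_singleton, layerDeg, Sp_one]

theorem mem_Fset_merged_iff {L : ℕ} (hL : 2 ≤ L) {k s k' s' : ℕ → ℕ} (hk0 : 1 ≤ k 0)
    (hk'0 : k' 0 = k 0 + s 0 * (k 1 - 1)) (hk' : ∀ i, 1 ≤ i → k' i = k (i + 1))
    (hs'0 : s' 0 = s 0 * s 1) (hs' : ∀ i, 1 ≤ i → s' i = s (i + 1))
    {P : MvPolynomial (Fin 2) ℂ} :
    P ∈ Fset (L - 1) k' s' ↔ ∃ C T, P = C * T ∧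
      C.IsHomogeneous (k 0 - 1 + s 0 * (k 1 - 1)) ∧
        IsLayered (Ico 2 L) (layerDeg k s) (Sp s) T := by
  have hdeg : k' 0 - 1 = k 0 - 1 + s 0 * (k 1 - 1) := by
    rw [hk'0]
    generalize s 0 * (k 1 - 1) = m
    omega
  have hshift : Ico 2 L = (Ico 1 (L - 1)).map (addRightEmbedding 1) := by
    rw [map_add_right_Ico, Nat.sub_add_cancel (by omega : 1 ≤ L)]
  rw [mem_Fset_iff_exists_mul (by omega), hdeg, hshift]
  refine exists₂_congr fun C T => and_congr_right fun _ => and_congr_right fun _ => ?_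
  rw [isLayered_map]
  refine isLayered_congr (fun i hi => ?_) (fun i hi => ?_) <;> rw [mem_Ico] at hi <;>
    simp [layerDeg, Sp_eq_of_merge hs'0 hs' hi.1, hk' i hi.1]

theorem stmt_9 (L : ℕ) (hL : 2 ≤ L) (k s : ℕ → ℕ)
    (hk : ∀ i < L, 1 ≤ k i) (hs : ∀ i < L, 1 ≤ s i)
    (K : ℕ) (hK : K = k 0 + ∑ i ∈ Finset.Ico 1 L, (k i - 1) * Sp s i)
    (k' s' : ℕ → ℕ)
    (hk'0 : k' 0 = k 0 + s 0 * (k 1 - 1)) (hk' : ∀ i, 1 ≤ i → k' i = k (i + 1))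
    (hs'0 : s' 0 = s 0 * s 1) (hs' : ∀ i, 1 ≤ i → s' i = s (i + 1))
    (khat : ℕ) (hkhat : khat = (K - k 0) / s 0 + 1) :
    Fset L k s = Fset (L - 1) k' s' ∩
      Fset 2 (fun i => if i = 0 then k 0 else khat) (fun i => if i = 0 then s 0 else 1) := by
  have hs0 : 0 < s 0 := hs 0 (by omega)
  have htail_dvd : ∀ i ∈ Ico 1 L, s 0 ∣ Sp s i := fun i hi => dvd_Sp (by simp at hi; omega)
  have hkhat' : s 0 * (khat - 1) = ∑ i ∈ Ico 1 L, layerDeg k s i := by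
    simp_rw [hkhat, hK, Nat.add_sub_cancel_left, Nat.add_sub_cancel, layerDeg, mul_comm (Sp s _)]
    exact Nat.mul_div_cancel' (dvd_sum fun i hi => (htail_dvd i hi).mul_left _)
  ext P
  simp only [Set.mem_inter_iff, mem_Fset_iff_exists_mul (by omega : 0 < L),
    mem_Fset_merged_iff hL (hk 0 (by omega)) hk'0 hk' hs'0 hs', mem_Fset_two_iff, ↓reduceIte,
    one_ne_zero]
  constructor
  · rintro ⟨A, U, rfl, hA, hU⟩
    obtain ⟨B, T, rfl, hB, hT⟩ := (isLayered_Ico_one_iff (by omega)).1 hU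
    exact ⟨⟨A * B, T, (mul_assoc _ _ _).symm, hA.mul hB.1, hT⟩, A, B * T, rfl, hA,
      hkhat' ▸ hU.isHomogeneous, hU.monoS htail_dvd⟩
  · rintro ⟨⟨C, T, rfl, hC, hT⟩, R₀, R₁, heq, hR₀, hR₁, hR₁s⟩
    rcases eq_or_ne (C * T) 0 with hP | hP
    · exact hP ▸ (mem_Fset_iff_exists_mul (by omega)).1 (zero_mem_Fset (by omega) k s)
    obtain ⟨A, B, rfl, hA, hB, hBs⟩ := exists_eq_mul_monoS_of_mul_eq hs0 hC hT.isHomogeneous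
      (hT.monoS fun i hi => htail_dvd i (Ico_subset_Ico_left one_le_two hi)) hR₀ hR₁ hR₁s
      heq hP
    exact ⟨A, B * T, mul_assoc _ _ _, hA,
      (isLayered_Ico_one_iff (by omega)).2 ⟨B, T, rfl, ⟨hB, hBs⟩, hT⟩⟩
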